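/- arXiv:1010.4846 — 6 statements merged into one kernel-verified Lean document; each statement's English description precedes it below -/
import Mathlib

section
/- Let A be a commutative ℚ-algebra and a ∈ A. For every integer i ≥ 1 one has (1−a)^i / i = Σ_{j=1}^{i} (−1)^j · C(i−1, j−1) · (a^j − 1)/j, as elements of A. -/
/-!
Since `C(i-1, j-1) / j = C(i, j) / i`, the right-hand side is
`i⁻¹ • ∑_{j=0}^{i} (-1)^j C(i,j) (a^j - 1)` (the `j = 0` term vanishes), and by the binomial
theorem this sum is `(1 - a)^i - (1 - 1)^i = (1 - a)^i` for `i ≥ 1`.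
-/

open Finset

theorem one_sub_pow_eq_sum {R : Type*} [CommRing R] (x : R) (n : ℕ) :
    (1 - x) ^ n = ∑ j ∈ range (n + 1), (-1) ^ j * (n.choose j : R) * x ^ j := by
  rw [sub_eq_neg_add, add_pow]
  refine sum_congr rfl fun j _ => ?_
  rw [neg_pow, one_pow, mul_one]
  ring

theorem sum_neg_one_pow_mul_choose_mul_pow_sub_one {R : Type*} [CommRing R] (a : R) (n : ℕ) :
    ∑ j ∈ range (n + 1), (-1) ^ j * (n.choose j : R) * (a ^ j - 1) = (1 - a) ^ n - 0 ^ n := by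
  rw [one_sub_pow_eq_sum, ← sub_self (1 : R), one_sub_pow_eq_sum]
  simp only [mul_sub, sum_sub_distrib, one_pow, mul_one]

theorem Nat.cast_choose_div_add_one {K : Type*} [Field K] [CharZero K] (n j : ℕ) :
    (n.choose j : K) / (j + 1) = (n + 1).choose (j + 1) / (n + 1) := by
  have h := congrArg (Nat.cast (R := K)) (Nat.add_one_mul_choose_eq n j)
  push_cast at h
  field_simp
  linear_combination h

theorem stmt7_general {A : Type*} [CommRing A] [Algebra ℚ A] (a : A) (i : ℕ) :
    (i : ℚ)⁻¹ • (1 - a) ^ i =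
      ∑ j ∈ Finset.Icc 1 i,
        (((-1) ^ j * (Nat.choose (i - 1) (j - 1) : ℚ) / j)) • (a ^ j - 1) := by
  cases i with
  | zero => simp
  | succ n =>
    have hbinom : ∑ j ∈ range (n + 2), ((-1) ^ j * ((n + 1).choose j : ℚ)) • (a ^ j - 1) =
        (1 - a) ^ (n + 1) := by
      simpa [Algebra.smul_def] using sum_neg_one_pow_mul_choose_mul_pow_sub_one a (n + 1)
    rw [← hbinom, smul_sum, sum_range_succ', ← Ico_add_one_right_eq_Icc, sum_Ico_eq_sum_range]
    simp only [pow_zero, sub_self, smul_zero, add_zero, smul_smul, add_tsub_cancel_right]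
    refine sum_congr rfl fun j _ => ?_
    rw [add_comm 1 j, add_tsub_cancel_right, mul_div_assoc, Nat.cast_succ j,
      Nat.cast_choose_div_add_one]
    congr 1
    push_cast
    ring

theorem stmt7 {A : Type*} [CommRing A] [Algebra ℚ A] (a : A) (i : ℕ) (hi : 1 ≤ i) :
    (i : ℚ)⁻¹ • (1 - a) ^ i =
      ∑ j ∈ Finset.Icc 1 i,
        (((-1) ^ j * (Nat.choose (i - 1) (j - 1) : ℚ) / j)) • (a ^ j - 1) :=
  stmt7_general a i
end

section
/- Let A be a commutative ℚ-algebra and a, b ∈ A. For every integer i ≥ 1 one has the identity (1 − ab)^i / i = (1 − a)^i / i + Σ_{j=1}^{i} C(i−1, j−1) · a^j · (1−a)^{i−j} · (1−b)^j / j. -/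
/-!
Expand `1 - a * b = a * (1 - b) + (1 - a)` by the binomial theorem. The `j = 0` term is
`(1 - a) ^ i`, and for `j ≥ 1` the absorption identity `C(i, j) / i = C(i - 1, j - 1) / j`
turns the remaining coefficients into the stated ones.
-/

open Finset

theorem inv_add_one_mul_choose_add_one (n j : ℕ) :
    ((n + 1 : ℚ))⁻¹ * (n + 1).choose (j + 1) = n.choose j / (j + 1) := by
  have h : ((n + 1 : ℕ) : ℚ) * n.choose j = (n + 1).choose (j + 1) * (j + 1) := by
    exact_mod_cast Nat.add_one_mul_choose_eq n j
  push_cast at h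
  field_simp
  linarith

theorem inv_smul_add_pow {A : Type*} [CommRing A] [Algebra ℚ A] (x y : A) (n : ℕ) :
    (n : ℚ)⁻¹ • (x + y) ^ n =
      (n : ℚ)⁻¹ • y ^ n +
        ∑ j ∈ Icc 1 n, ((n - 1).choose (j - 1) / j : ℚ) • (x ^ j * y ^ (n - j)) := by
  rcases n with _ | m
  · simp
  rw [add_pow, smul_sum, sum_range_succ', add_comm, ← Ico_add_one_right_eq_Icc,
    sum_Ico_eq_sum_range]
  simp only [pow_zero, one_mul, Nat.choose_zero_right, Nat.cast_one, mul_one, Nat.sub_zero,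
    Nat.add_sub_cancel]
  congr 1
  refine sum_congr rfl fun j _ => ?_
  rw [add_comm 1 j, Nat.add_sub_cancel, mul_comm _ ((m + 1).choose (j + 1) : A), ← nsmul_eq_mul,
    ← Nat.cast_smul_eq_nsmul ℚ, smul_smul]
  push_cast
  rw [inv_add_one_mul_choose_add_one]

theorem stmt8_general {A : Type*} [CommRing A] [Algebra ℚ A] (a b : A) (i : ℕ) :
    (i : ℚ)⁻¹ • (1 - a * b) ^ i =
      (i : ℚ)⁻¹ • (1 - a) ^ i +
        ∑ j ∈ Finset.Icc 1 i,
          ((Nat.choose (i - 1) (j - 1) : ℚ) / j) • (a ^ j * (1 - a) ^ (i - j) * (1 - b) ^ j) := by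
  rw [show 1 - a * b = a * (1 - b) + (1 - a) by ring, inv_smul_add_pow]
  congr 1
  refine sum_congr rfl fun j _ => ?_
  rw [mul_pow, mul_right_comm]

theorem stmt8 {A : Type*} [CommRing A] [Algebra ℚ A] (a b : A) (i : ℕ) (hi : 1 ≤ i) :
    (i : ℚ)⁻¹ • (1 - a * b) ^ i =
      (i : ℚ)⁻¹ • (1 - a) ^ i +
        ∑ j ∈ Finset.Icc 1 i,
          ((Nat.choose (i - 1) (j - 1) : ℚ) / j) • (a ^ j * (1 - a) ^ (i - j) * (1 - b) ^ j) :=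
  stmt8_general a b i
end

section
/- Let p be a prime. Define ℓ(0) = 0 and, for i ≥ 1, let ℓ(i) be the integer part of log_p(i) (i.e., the largest n with p^n ≤ i). Then for every integer m ≥ 1 and every integer j with 1 ≤ j ≤ p^m − 1, one has ℓ(p^m − j) + ℓ(j) − v_p(j) ≥ m − 1. -/
/-! Since `j < p ^ m`, `ℓ(j) ≤ m - 1`. If `ℓ(j) < m - 1`, then `j < p ^ (m - 1)`, so
`p ^ m - j ≥ p ^ (m - 1)` and the bound follows from `v_p(j) ≤ ℓ(j)`. If `ℓ(j) = m - 1`, it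
suffices that `v_p(j) ≤ ℓ(p ^ m - j)`, which holds because `p ^ v_p(j)` divides both `j` and
`p ^ m`. -/

namespace Nat

variable {p j : ℕ}

lemma le_log_pow_succ_sub (hp : 1 < p) {n : ℕ} (hj : j < p ^ n) :
    n ≤ log p (p ^ (n + 1) - j) := by
  refine le_log_of_pow_le hp ?_
  have : p ^ n * 2 ≤ p ^ (n + 1) := by rw [pow_succ]; exact Nat.mul_le_mul_left _ hp
  omega

lemma padicValNat_le_log_pow_sub (hp : 1 < p) {m : ℕ} (hj0 : j ≠ 0) (hj : j < p ^ m) :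
    padicValNat p j ≤ log p (p ^ m - j) := by
  have hdvd_j : p ^ padicValNat p j ∣ j := pow_padicValNat_dvd
  have hv : padicValNat p j ≤ m :=
    (padicValNat_le_nat_log j).trans (log_lt_of_lt_pow hj0 hj).le
  have hdvd : p ^ padicValNat p j ∣ p ^ m - j := Nat.dvd_sub (pow_dvd_pow p hv) hdvd_j
  exact le_log_of_pow_le hp (le_of_dvd (by omega) hdvd)

end Nat

theorem stmt9 (p : ℕ) (hp : p.Prime) (m j : ℕ) (hm : 1 ≤ m) (h1 : 1 ≤ j)
    (h2 : j ≤ p ^ m - 1) :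
    (m : ℤ) - 1 ≤ (Nat.log p (p ^ m - j) : ℤ) + (Nat.log p j : ℤ) - (padicValNat p j : ℤ) := by
  obtain ⟨n, rfl⟩ : ∃ n, m = n + 1 := ⟨m - 1, by omega⟩
  have hj : j < p ^ (n + 1) := by have := Nat.one_le_pow (n + 1) p hp.pos; omega
  have hlog : Nat.log p j ≤ n := Nat.lt_succ_iff.mp (Nat.log_lt_of_lt_pow (by omega) hj)
  have hv : padicValNat p j ≤ Nat.log p j := padicValNat_le_nat_log j
  rcases hlog.lt_or_eq with hlt | heq
  · have := Nat.le_log_pow_succ_sub hp.one_lt (Nat.lt_pow_of_log_lt hp.one_lt hlt)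
    omega
  · have := Nat.padicValNat_le_log_pow_sub hp.one_lt (by omega) hj
    omega
end

section
/- Let A be a ℚ_p-algebra, Λ ⊆ A a ℤ_p-submodule, m ≥ 1, and a ∈ A an element Λ-bounded at order m (Λ is stable under multiplication by a and (1−a)^i/i ∈ Λ for 1 ≤ i ≤ p^m). Then a^{p^m} ≡ 1 (mod p^m Λ). -/
/-- `a` is `Λ`-bounded at order `m`: `Λ` is stable under left multiplication by `a`
and `(1-a)^i / i ∈ Λ` for all `1 ≤ i ≤ p^m`. -/
def LambdaBounded (p : ℕ) [Fact p.Prime] {A : Type*} [Ring A] [Algebra ℚ_[p] A]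
    [Module ℤ_[p] A] (Λ : Submodule ℤ_[p] A) (m : ℕ) (a : A) : Prop :=
  (∀ x ∈ Λ, a * x ∈ Λ) ∧ ∀ i : ℕ, 1 ≤ i → i ≤ p ^ m → (i : ℚ_[p])⁻¹ • (1 - a) ^ i ∈ Λ

/-! Writing `a = (a - 1) + 1`, the binomial theorem and `C(N, k + 1) = N / (k + 1) * C(N - 1, k)`
give `a ^ N - 1 = N • ∑ₖ C(N - 1, k) • ((a - 1) ^ (k + 1) / (k + 1))`. For `N = p ^ m` every
summand lies in `Λ`, since `(a - 1) ^ i / i = ± (1 - a) ^ i / i`. -/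

open Finset

theorem add_one_pow_eq_one_add_sum {R : Type*} [Semiring R] (x : R) (n : ℕ) :
    (x + 1) ^ n = 1 + ∑ k ∈ range n, n.choose (k + 1) • x ^ (k + 1) := by
  rw [(Commute.one_right x).add_pow, sum_range_succ', add_comm]
  simp [nsmul_eq_mul, Nat.cast_comm]

theorem choose_succ_smul_eq (K : Type*) {M : Type*} [DivisionRing K] [CharZero K]
    [AddCommGroup M] [Module K M] (n k : ℕ) (x : M) :
    (n + 1).choose (k + 1) • x = (n + 1) • n.choose k • ((k + 1 : K)⁻¹ • x) := by
  have hk : (k + 1 : K) ≠ 0 := Nat.cast_add_one_ne_zero k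
  have hchoose : ((n + 1).choose (k + 1) : K) = (n + 1) * n.choose k * (k + 1 : K)⁻¹ := by
    rw [eq_mul_inv_iff_mul_eq₀ hk]
    exact_mod_cast (Nat.add_one_mul_choose_eq n k).symm
  simp only [← Nat.cast_smul_eq_nsmul K, smul_smul, hchoose, Nat.cast_add_one, mul_assoc]

theorem pow_succ_sub_one_eq_nsmul_sum (K : Type*) {A : Type*} [Field K] [CharZero K] [Ring A]
    [Algebra K A] (a : A) (n : ℕ) :
    a ^ (n + 1) - 1 =
      (n + 1) • ∑ k ∈ range (n + 1), n.choose k • ((k + 1 : K)⁻¹ • (a - 1) ^ (k + 1)) := by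
  conv_lhs => rw [← sub_add_cancel a 1, add_one_pow_eq_one_add_sum, add_sub_cancel_left]
  simp only [smul_sum, choose_succ_smul_eq K]

theorem LambdaBounded.inv_smul_sub_one_pow_mem {p : ℕ} [Fact p.Prime] {A : Type*} [Ring A]
    [Algebra ℚ_[p] A] [Module ℤ_[p] A] {Λ : Submodule ℤ_[p] A} {m : ℕ} {a : A}
    (ha : LambdaBounded p Λ m a) {i : ℕ} (hi₁ : 1 ≤ i) (hi₂ : i ≤ p ^ m) :
    (i : ℚ_[p])⁻¹ • (a - 1) ^ i ∈ Λ := by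
  have hmem := ha.2 i hi₁ hi₂
  rw [← neg_sub, neg_pow]
  rcases neg_one_pow_eq_or A i with h | h <;> simp [h, hmem]

theorem stmt13_general (p : ℕ) [Fact p.Prime] {A : Type*} [Ring A]
    [Algebra ℚ_[p] A] [Module ℤ_[p] A]
    (Λ : Submodule ℤ_[p] A) (m : ℕ)
    (a : A) (ha : LambdaBounded p Λ m a) :
    ∃ y ∈ Λ, a ^ p ^ m - 1 = ((p : ℤ_[p]) ^ m) • y := by
  obtain ⟨n, hn⟩ : ∃ n, p ^ m = n + 1 :=
    Nat.exists_eq_add_one_of_ne_zero (pow_ne_zero m (Fact.out : p.Prime).ne_zero)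
  refine ⟨∑ k ∈ range (n + 1), n.choose k • ((k + 1 : ℚ_[p])⁻¹ • (a - 1) ^ (k + 1)), ?_, ?_⟩
  · refine Submodule.sum_mem _ fun k hk => Submodule.smul_of_tower_mem _ _ ?_
    exact_mod_cast ha.inv_smul_sub_one_pow_mem (Nat.le_add_left 1 k)
      (hn ▸ Nat.succ_le_of_lt (mem_range.mp hk))
  · rw [← Nat.cast_pow, Nat.cast_smul_eq_nsmul, hn]
    exact pow_succ_sub_one_eq_nsmul_sum ℚ_[p] a n

theorem stmt13 (p : ℕ) [Fact p.Prime] (hp : p.Prime) {A : Type*} [Ring A]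
    [Algebra ℚ_[p] A] [Module ℤ_[p] A] [IsScalarTower ℤ_[p] ℚ_[p] A]
    (Λ : Submodule ℤ_[p] A) (m : ℕ) (hm : 1 ≤ m)
    (a : A) (ha : LambdaBounded p Λ m a) :
    ∃ y ∈ Λ, a ^ p ^ m - 1 = ((p : ℤ_[p]) ^ m) • y :=
  stmt13_general p Λ m a ha
end

section
/- Let A be a ℚ_p-algebra, Λ ⊆ A a ℤ_p-submodule, m ≥ 1, and a ∈ A an element Λ-bounded at order m. Then for every i with 1 ≤ i ≤ p^m one has (1−a)^i ∈ p^{ℓ(i)} Λ, and for every i > p^m one has (1−a)^i ∈ p^m Λ, where ℓ(i) = ⌊log_p i⌋. -/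
theorem stmt14 (p : ℕ) [Fact p.Prime] {A : Type*} [Ring A]
    [Algebra ℚ_[p] A] [Module ℤ_[p] A] [IsScalarTower ℤ_[p] ℚ_[p] A]
    (Λ : Submodule ℤ_[p] A) (m : ℕ) (hm : 1 ≤ m)
    (a : A) (ha : LambdaBounded p Λ m a) :
    (∀ i : ℕ, 1 ≤ i → i ≤ p ^ m →
        ∃ y ∈ Λ, (1 - a) ^ i = ((p : ℤ_[p]) ^ (Nat.log p i)) • y) ∧
    (∀ i : ℕ, p ^ m < i → ∃ y ∈ Λ, (1 - a) ^ i = ((p : ℤ_[p]) ^ m) • y) := by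
  obtain ⟨hstab, hbd⟩ := ha
  have hp1 : 1 < p := (Fact.out : p.Prime).one_lt
  -- Λ is stable under left multiplication by (1 - a)
  have hsub : ∀ x ∈ Λ, (1 - a) * x ∈ Λ := by
    intro x hx
    have h := Λ.sub_mem hx (hstab x hx)
    simpa [sub_mul, one_mul] using h
  have hpow : ∀ n : ℕ, ∀ x ∈ Λ, (1 - a) ^ n * x ∈ Λ := by
    intro n
    induction n with
    | zero => intro x hx; simpa using hx
    | succ n ih =>
      intro x hx
      have h := ih _ (hsub x hx)
      simpa [pow_succ, mul_assoc] using h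
  -- scalar commutation for ℤ_p scalars
  have hcomm : ∀ (c : ℤ_[p]) (x y : A), x * (c • y) = c • (x * y) := by
    intro c x y
    rw [← algebraMap_smul ℚ_[p] c y, ← algebraMap_smul ℚ_[p] c (x * y), mul_smul_comm]
  -- key : (1-a)^(p^k) = p^k • y₀ with y₀ ∈ Λ, for k ≤ m
  have hkey : ∀ k : ℕ, k ≤ m → ∃ y₀ ∈ Λ, (1 - a) ^ (p ^ k) = ((p : ℤ_[p]) ^ k) • y₀ := by
    intro k hk
    have h1 : 1 ≤ p ^ k := Nat.one_le_pow _ _ (by omega)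
    have h2 : p ^ k ≤ p ^ m := Nat.pow_le_pow_right (by omega) hk
    refine ⟨((p ^ k : ℕ) : ℚ_[p])⁻¹ • (1 - a) ^ (p ^ k), hbd _ h1 h2, ?_⟩
    have hne : ((p ^ k : ℕ) : ℚ_[p]) ≠ 0 := by
      exact Nat.cast_ne_zero.mpr (Nat.one_le_iff_ne_zero.mp h1)
    rw [← algebraMap_smul ℚ_[p] ((p : ℤ_[p]) ^ k)]
    have hmap : algebraMap ℤ_[p] ℚ_[p] ((p : ℤ_[p]) ^ k) = ((p ^ k : ℕ) : ℚ_[p]) := by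
      push_cast
      simp [map_pow]
    rw [hmap, smul_inv_smul₀ hne]
  -- general step: for k ≤ m and p^k ≤ i, get (1-a)^i ∈ p^k • Λ
  have hmain : ∀ (k i : ℕ), k ≤ m → p ^ k ≤ i →
      ∃ y ∈ Λ, (1 - a) ^ i = ((p : ℤ_[p]) ^ k) • y := by
    intro k i hk hi
    obtain ⟨y₀, hy₀, hy₀eq⟩ := hkey k hk
    refine ⟨(1 - a) ^ (i - p ^ k) * y₀, hpow _ _ hy₀, ?_⟩
    calc (1 - a) ^ i = (1 - a) ^ (i - p ^ k) * (1 - a) ^ (p ^ k) := by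
          rw [← pow_add, Nat.sub_add_cancel hi]
      _ = (1 - a) ^ (i - p ^ k) * (((p : ℤ_[p]) ^ k) • y₀) := by rw [hy₀eq]
      _ = ((p : ℤ_[p]) ^ k) • ((1 - a) ^ (i - p ^ k) * y₀) := hcomm _ _ _
  constructor
  · intro i h1 h2
    have hk : Nat.log p i ≤ m := by
      have := Nat.log_mono_right (b := p) h2
      simpa [Nat.log_pow hp1] using this
    exact hmain _ i hk (Nat.pow_log_le_self p (by omega))
  · intro i hi
    exact hmain m i le_rfl hi.le
end

section
/- Let p be a prime and M a free ℤ_p-module of rank d, and let f : M → M be a ℤ_p-linear endomorphism such that f^{p^n} ≡ id (mod p·End(M)) for some n ≥ 0. Then for every integer t ≥ 0 with d ≥ p^{t−1}(p−1), and for every integer i ≥ 1, the endomorphism (id − f^{p^t})^i maps M into p^{⌈(p^t/d)·i − 1⌉} M (i.e., v_p((id − f^{p^t})^i) ≥ (p^t/d)·i − 1). -/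
/-!
Put `a = f - 1` and give `p` weight `d` and `a` weight `1`. Since `f` is unipotent mod `p`, `a` is
nilpotent mod `p`, so Cayley–Hamilton gives `a ^ d ∈ p • End M`: an element of weight `r` is
divisible by `p ^ ⌊r / d⌋`. By the binomial theorem `1 - f ^ p ^ t = -∑ₖ C(p ^ t, k) a ^ k`, and
`p ^ (t - v_p k) ∣ C(p ^ t, k)`; the bound `d ≥ p ^ (t - 1) (p - 1)` makes every term of weight at
least `p ^ t`. Weights add under products, so `(1 - f ^ p ^ t) ^ i` has weight `p ^ t * i`.
-/

open Module Pointwise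

theorem Nat.pow_le_mul_sub_add_pow {p d t : ℕ} (hp : 1 ≤ p) (hd : ∀ j < t, p ^ j * (p - 1) ≤ d)
    (v : ℕ) : p ^ t ≤ d * (t - v) + p ^ v := by
  induction t with
  | zero => simpa using Nat.one_le_pow v p hp
  | succ t ih =>
    rcases le_or_gt (t + 1) v with htv | hvt
    · exact (Nat.pow_le_pow_right hp htv).trans (Nat.le_add_left _ _)
    · have hstep : p ^ (t + 1) = p ^ t + p ^ t * (p - 1) := by
        rw [pow_succ, ← mul_one_add, Nat.add_sub_cancel' hp]
      have := ih fun j hj => hd j (by omega)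
      have := hd t (by omega)
      rw [hstep, show t + 1 - v = t - v + 1 by omega, mul_add_one]
      omega

theorem Nat.forall_pow_mul_sub_one_le {p d t : ℕ} (hp : 1 ≤ p)
    (ht : (p : ℚ) ^ ((t : ℤ) - 1) * ((p : ℚ) - 1) ≤ d) : ∀ j < t, p ^ j * (p - 1) ≤ d := by
  intro j hj
  have hpow : (p : ℚ) ^ j ≤ (p : ℚ) ^ ((t : ℤ) - 1) := by
    rw [← zpow_natCast]
    exact zpow_le_zpow_right₀ (by exact_mod_cast hp) (by omega)
  have hp' : (1 : ℚ) ≤ p := by exact_mod_cast hp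
  exact_mod_cast (show ((p ^ j * (p - 1) : ℕ) : ℚ) ≤ d by
    push_cast [Nat.cast_sub hp]
    exact (mul_le_mul_of_nonneg_right hpow (by linarith)).trans ht)

theorem Nat.toNat_ceil_div_sub_one_le (m d : ℕ) : ⌈(m : ℚ) / d - 1⌉.toNat ≤ m / d := by
  rw [Int.toNat_le, Int.ceil_le, sub_le_iff_le_add]
  push_cast
  have h := Nat.lt_floor_add_one ((m : ℚ) / d)
  rw [Nat.floor_div_eq_div] at h
  exact h.le

theorem Nat.Prime.pow_sub_multiplicity_dvd_choose_pow {p : ℕ} (hp : p.Prime) {t k : ℕ}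
    (hk0 : k ≠ 0) (hk : k ≤ p ^ t) : p ^ (t - multiplicity p k) ∣ (p ^ t).choose k :=
  pow_dvd_of_le_emultiplicity (by rw [hp.emultiplicity_choose_prime_pow hk hk0])

section

variable {R A : Type*} [CommRing R] [Ring A] [Algebra R A]

/-- The filtration by weight, where `π` has weight `d` and `a` has weight `1`. -/
def weightFiltration (π : R) (a : A) (d r : ℕ) : Submodule R A :=
  Submodule.span R {x | ∃ c k : ℕ, r ≤ d * c + k ∧ x = π ^ c • a ^ k}

namespace weightFiltration

variable {π : R} {a : A} {d : ℕ}

theorem pow_smul_pow_mem {r c k : ℕ} (h : r ≤ d * c + k) :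
    π ^ c • a ^ k ∈ weightFiltration π a d r :=
  Submodule.subset_span ⟨c, k, h, rfl⟩

theorem mul_le (r s : ℕ) :
    weightFiltration π a d r * weightFiltration π a d s ≤ weightFiltration π a d (r + s) := by
  rw [weightFiltration, weightFiltration, Submodule.span_mul_span]
  refine Submodule.span_le.mpr ?_
  rintro _ ⟨_, ⟨c, k, hck, rfl⟩, _, ⟨c', k', hck', rfl⟩, rfl⟩
  change _ * _ ∈ _
  rw [smul_mul_smul_comm, ← pow_add, ← pow_add]
  exact pow_smul_pow_mem (by rw [mul_add]; omega)

theorem pow_mem {x : A} {r : ℕ} (hx : x ∈ weightFiltration π a d r) (m : ℕ) :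
    x ^ m ∈ weightFiltration π a d (r * m) := by
  induction m with
  | zero => simpa using (pow_smul_pow_mem le_rfl : π ^ 0 • a ^ 0 ∈ weightFiltration π a d 0)
  | succ m ih => rw [pow_succ, mul_add_one]; exact mul_le _ _ (Submodule.mul_mem_mul ih hx)

theorem le_pow_smul_top {g : A} (ha : a ^ d = π • g) {r m : ℕ} (hm : m ≤ r / d) :
    weightFiltration π a d r ≤ π ^ m • (⊤ : Submodule R A) := by
  refine Submodule.span_le.mpr ?_
  rintro _ ⟨c, k, hck, rfl⟩
  have hk : a ^ k = π ^ (k / d) • (g ^ (k / d) * a ^ (k % d)) := by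
    rw [← smul_mul_assoc, ← smul_pow, ← ha, ← pow_mul, ← pow_add, Nat.div_add_mod]
  have hmk : m ≤ c + k / d := by
    rcases Nat.eq_zero_or_pos d with rfl | hd
    · simp_all
    · calc m ≤ r / d := hm
        _ ≤ (d * c + k) / d := Nat.div_le_div_right hck
        _ = c + k / d := Nat.mul_add_div hd c k
  refine Submodule.mem_smul_pointwise_iff_exists _ _ _ |>.mpr
    ⟨π ^ (c + k / d - m) • g ^ (k / d) * a ^ (k % d), Submodule.mem_top, ?_⟩
  rw [hk, smul_mul_assoc, smul_smul, smul_smul, ← pow_add, ← pow_add, Nat.add_sub_cancel' hmk]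

theorem one_sub_add_one_pow_mem (a : A) {p d t : ℕ} (hp : p.Prime)
    (hd : ∀ j < t, p ^ j * (p - 1) ≤ d) :
    1 - (a + 1) ^ p ^ t ∈ weightFiltration (p : R) a d (p ^ t) := by
  rw [(Commute.one_right a).add_pow, Finset.sum_range_succ']
  simp only [one_pow, mul_one, pow_zero, Nat.choose_zero_right, Nat.cast_one, sub_add_cancel_right]
  refine Submodule.neg_mem _ (Submodule.sum_mem _ fun k hk => ?_)
  have hk : k + 1 ≤ p ^ t := Finset.mem_range.mp hk
  obtain ⟨z, hz⟩ := hp.pow_sub_multiplicity_dvd_choose_pow k.succ_ne_zero hk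
  have hweight : p ^ t ≤ d * (t - multiplicity p (k + 1)) + (k + 1) :=
    (Nat.pow_le_mul_sub_add_pow hp.one_le hd _).trans
      (by gcongr; exact Nat.le_of_dvd k.succ_pos (pow_multiplicity_dvd p (k + 1)))
  rw [← nsmul_eq_mul', hz, mul_nsmul, ← Nat.cast_smul_eq_nsmul R (p ^ _), Nat.cast_pow]
  exact Submodule.smul_of_tower_mem _ z (pow_smul_pow_mem hweight)

end weightFiltration

end

theorem Matrix.pow_card_eq_zero_of_isNilpotent {K n : Type*} [CommRing K] [IsDomain K]
    [Fintype n] [DecidableEq n] {A : Matrix n n K} (hA : IsNilpotent A) :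
    A ^ Fintype.card n = 0 := by
  have hχ : A.charpoly = Polynomial.X ^ Fintype.card n :=
    sub_eq_zero.mp (Matrix.isNilpotent_charpoly_sub_pow_of_isNilpotent hA).eq_zero
  simpa [hχ] using A.aeval_self_charpoly

theorem Module.Basis.exists_eq_smul_of_forall_exists_eq_smul {R M ι : Type*} [CommRing R]
    [AddCommGroup M] [Module R M] (b : Basis ι R M) {g : Module.End R M} {π : R}
    (hg : ∀ x, ∃ y, g x = π • y) : ∃ h : Module.End R M, g = π • h := by
  choose y hy using fun i => hg (b i)
  exact ⟨b.constr R y, b.ext fun i => by simp [hy]⟩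

namespace PadicInt

variable {p : ℕ} [Fact p.Prime]

theorem toZMod_eq_zero_iff_dvd {x : ℤ_[p]} : toZMod x = 0 ↔ (p : ℤ_[p]) ∣ x := by
  rw [← RingHom.mem_ker, ker_toZMod, maximalIdeal_eq_span_p, Ideal.mem_span_singleton]

theorem mapMatrix_toZMod_eq_zero_iff {ι : Type*} [Fintype ι] [DecidableEq ι]
    {A : Matrix ι ι ℤ_[p]} : toZMod.mapMatrix A = 0 ↔ ∃ G, A = (p : ℤ_[p]) • G := by
  constructor
  · intro h
    choose G hG using fun i j => toZMod_eq_zero_iff_dvd.mp (congrFun₂ h i j)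
    exact ⟨Matrix.of G, Matrix.ext hG⟩
  · rintro ⟨G, rfl⟩
    ext i j
    simp

theorem exists_sub_one_pow_finrank_eq_smul {M : Type*} [AddCommGroup M] [Module ℤ_[p] M]
    [Module.Free ℤ_[p] M] [Module.Finite ℤ_[p] M] (f : Module.End ℤ_[p] M) (n : ℕ)
    (hf : ∀ x, ∃ y, (f ^ p ^ n) x - x = (p : ℤ_[p]) • y) :
    ∃ g : Module.End ℤ_[p] M, (f - 1) ^ finrank ℤ_[p] M = (p : ℤ_[p]) • g := by
  let b := Free.chooseBasis ℤ_[p] M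
  let E := LinearMap.toMatrixAlgEquiv b
  let ψ := (toZMod : ℤ_[p] →+* ZMod p).mapMatrix.comp E.toRingHom
  have hψ {g : Module.End ℤ_[p] M} : ψ g = 0 ↔ ∃ h, g = (p : ℤ_[p]) • h := by
    simp only [ψ, RingHom.comp_apply, mapMatrix_toZMod_eq_zero_iff]
    constructor
    · rintro ⟨G, hG⟩
      exact ⟨E.symm G, E.injective (by rw [map_smul, E.apply_symm_apply]; exact hG)⟩
    · rintro ⟨h, rfl⟩
      exact ⟨E h, map_smul E _ h⟩
  have hpow : ψ f ^ p ^ n = 1 := by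
    have h := hψ.mpr (b.exists_eq_smul_of_forall_exists_eq_smul (g := f ^ p ^ n - 1) hf)
    rwa [map_sub, map_pow, map_one, sub_eq_zero] at h
  -- The matrix ring is trivial in rank `0` and then has no `CharP p` instance, so the Frobenius
  -- identity is evaluated from `(ZMod p)[X]`.
  have hnil : IsNilpotent (ψ f - 1) := ⟨p ^ n, by
    simpa [hpow] using congrArg (Polynomial.aeval (ψ f))
      (sub_pow_char_pow (Polynomial.X : Polynomial (ZMod p)) 1 n)⟩
  rw [finrank_eq_card_chooseBasisIndex, ← hψ, map_pow, map_sub, map_one]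
  exact Matrix.pow_card_eq_zero_of_isNilpotent hnil

end PadicInt

theorem stmt16_general (p : ℕ) [Fact p.Prime] {M : Type*} [AddCommGroup M] [Module ℤ_[p] M]
    [Module.Free ℤ_[p] M] [Module.Finite ℤ_[p] M] (d : ℕ)
    (hd : Module.finrank ℤ_[p] M = d)
    (f : M →ₗ[ℤ_[p]] M) (n : ℕ)
    (hf : ∀ x : M, ∃ y : M, (f ^ p ^ n) x - x = (p : ℤ_[p]) • y)
    (t : ℕ) (ht : (p : ℚ) ^ ((t : ℤ) - 1) * ((p : ℚ) - 1) ≤ (d : ℚ))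
    (i : ℕ) :
    ∀ x : M, ∃ y : M,
      ((1 - f ^ p ^ t) ^ i) x =
        ((p : ℤ_[p]) ^ (⌈((p : ℚ) ^ t / (d : ℚ)) * (i : ℚ) - 1⌉.toNat)) • y := by
  intro x
  have hp : p.Prime := Fact.out
  obtain ⟨g, hg⟩ := PadicInt.exists_sub_one_pow_finrank_eq_smul f n hf
  rw [hd] at hg
  have hmem : (1 - f ^ p ^ t) ^ i ∈ weightFiltration (p : ℤ_[p]) (f - 1) d (p ^ t * i) := by
    have h := weightFiltration.one_sub_add_one_pow_mem (R := ℤ_[p]) (f - 1) hp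
      (Nat.forall_pow_mul_sub_one_le hp.one_le ht)
    rw [sub_add_cancel] at h
    exact weightFiltration.pow_mem h i
  -- In rank `0` the exponent is `⌈-1⌉.toNat = 0`, matching `_ / 0 = 0` on the right.
  have hN : ⌈(p : ℚ) ^ t / d * i - 1⌉.toNat ≤ p ^ t * i / d := by
    simpa [mul_div_right_comm] using Nat.toNat_ceil_div_sub_one_le (p ^ t * i) d
  obtain ⟨h, -, hh⟩ := (Submodule.mem_smul_pointwise_iff_exists _ _ _).mp
    (weightFiltration.le_pow_smul_top hg hN hmem)
  exact ⟨h x, by rw [← hh]; rfl⟩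

theorem stmt16 (p : ℕ) [Fact p.Prime] {M : Type*} [AddCommGroup M] [Module ℤ_[p] M]
    [Module.Free ℤ_[p] M] [Module.Finite ℤ_[p] M] (d : ℕ)
    (hd : Module.finrank ℤ_[p] M = d)
    (f : M →ₗ[ℤ_[p]] M) (n : ℕ)
    (hf : ∀ x : M, ∃ y : M, (f ^ p ^ n) x - x = (p : ℤ_[p]) • y)
    (t : ℕ) (ht : (p : ℚ) ^ ((t : ℤ) - 1) * ((p : ℚ) - 1) ≤ (d : ℚ))
    (i : ℕ) (hi : 1 ≤ i) :
    ∀ x : M, ∃ y : M,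
      ((1 - f ^ p ^ t) ^ i) x =
        ((p : ℤ_[p]) ^ (⌈((p : ℚ) ^ t / (d : ℚ)) * (i : ℚ) - 1⌉.toNat)) • y :=
  stmt16_general p d hd f n hf t ht i
end
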